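/- arXiv:2403.16693 — 2 statements merged into one kernel-verified Lean document; each statement's English description precedes it below -/
import Mathlib

section
/- First characterization of the viscosity Neumann condition (Lemma 4.2): Let S₁⁺ = S₁(0,0) ∩ {z > 0}, T₁ = S₁(0,0) ∩ {z = 0}, let a^{ij} be bounded measurable symmetric uniformly elliptic coefficients, f ∈ C(T₁), F ∈ C(S₁⁺ ∪ T₁), and let U be continuous on the closure of S₁⁺. Then the following two conditions are equivalent: (ii) whenever ψ ∈ C_s touches U from above at a point (x₀,0) ∈ T₁, then ∂_zψ(x₀,0) ≥ f(x₀); (ii)' whenever ψ ∈ C_s touches U from above at a point (x₀,0) ∈ T₁, then either a^{ij}(x₀)∂_{ij}ψ(x₀,0) + lim_{z→0⁺} z^{2−1/s}∂_{zz}ψ(x₀,z) ≥ F(x₀,0), or ∂_zψ(x₀,0) ≥ f(x₀). (The analogous equivalence holds for touching from below with the reversed inequalities.) -/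
/-!
If `ψ` touches `U` from above at `(x₀, 0)` with `∂_zψ(x₀, 0) = L`, then so does
`ψ + ε z - K z^{1/s}` for every `K`, since `1/s > 1` makes `ε z` dominate `K z^{1/s}` near
`z = 0`. This perturbation stays in `C_s`, has normal derivative `L + ε`, and its operator
value `a^{ij}∂_{ij} + z^{2-1/s}∂_{zz}` drops by exactly `K (1/s)(1/s - 1)`. Taking `K` large
rules out the first alternative of (ii)', so `f(x₀) ≤ L + ε` for every `ε > 0`.
-/

open Set Filter Topology MeasureTheory
open scoped RealInnerProductSpace

noncomputable section

/-- ℝⁿ as Euclidean space. -/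
abbrev Euc (n : ℕ) : Type := EuclideanSpace ℝ (Fin n)

/-- Points of ℝⁿ⁺¹ = ℝⁿ × ℝ. -/
abbrev Pt (n : ℕ) : Type := Euc n × ℝ

/-- `h(z) = s²/(1−s)·|z|^{1/s}`. -/
def hfun (s z : ℝ) : ℝ := s ^ 2 / (1 - s) * |z| ^ (1 / s)

/-- `h'(z) = s/(1−s)·z·|z|^{1/s−2}`. -/
def hder (s z : ℝ) : ℝ := s / (1 - s) * z * |z| ^ (1 / s - 2)

/-- `h''(z) = |z|^{1/s−2}` (for `z ≠ 0`). -/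
def hsec (s z : ℝ) : ℝ := |z| ^ (1 / s - 2)

/-- Monge–Ampère quasi-distance associated to `h`. -/
def deltaH (s z₀ z : ℝ) : ℝ := hfun s z - hfun s z₀ - hder s z₀ * (z - z₀)

/-- One-dimensional Monge–Ampère section of `h`. -/
def secH (s R z₀ : ℝ) : Set ℝ := {z | deltaH s z₀ z < R}

/-- `δ_φ(x₀,x) = |x−x₀|²/2`. -/
def deltaX {n : ℕ} (x₀ x : Euc n) : ℝ := ‖x - x₀‖ ^ 2 / 2

/-- Section of `φ(x)=|x|²/2` : the euclidean ball of radius `√(2R)`. -/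
def secX {n : ℕ} (R : ℝ) (x₀ : Euc n) : Set (Euc n) := {x | deltaX x₀ x < R}

/-- `δ_Φ = δ_φ + δ_h` on ℝⁿ⁺¹. -/
def deltaPhi {n : ℕ} (s : ℝ) (p q : Pt n) : ℝ := deltaX p.1 q.1 + deltaH s p.2 q.2

/-- Monge–Ampère section in ℝⁿ⁺¹. -/
def secPhi {n : ℕ} (s R : ℝ) (p : Pt n) : Set (Pt n) := {q | deltaPhi s p q < R}

/-- Monge–Ampère cube in ℝⁿ. -/
def cubeX {n : ℕ} (R : ℝ) (x₀ : Euc n) : Set (Euc n) :=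
  {x | ∀ i, |x i - x₀ i| < Real.sqrt (2 * R)}

/-- Monge–Ampère cube in ℝⁿ⁺¹. -/
def cubePhi {n : ℕ} (s R : ℝ) (p : Pt n) : Set (Pt n) := cubeX R p.1 ×ˢ secH s R p.2

/-- The measure `μ_h` on ℝ, with density `h''`. -/
def muH (s : ℝ) : Measure ℝ :=
  volume.withDensity fun z => ENNReal.ofReal (|z| ^ (1 / s - 2))

/-- The measure `μ_Φ` on ℝⁿ⁺¹, with density `h''(z)`. -/
def muPhi (n : ℕ) (s : ℝ) : Measure (Pt n) :=
  (volume : Measure (Pt n)).withDensity fun p => ENNReal.ofReal (|p.2| ^ (1 / s - 2))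

/-- Partial derivative `∂_z`. -/
def pZ {n : ℕ} (U : Pt n → ℝ) (p : Pt n) : ℝ := deriv (fun t => U (p.1, t)) p.2

/-- Partial derivative `∂_zz`. -/
def pZZ {n : ℕ} (U : Pt n → ℝ) (p : Pt n) : ℝ :=
  deriv (fun t => deriv (fun t' => U (p.1, t')) t) p.2

/-- `i`-th standard basis vector of ℝⁿ. -/
def basisVec {n : ℕ} (i : Fin n) : Euc n := EuclideanSpace.single i 1

/-- Partial derivative `∂_i` in the `x` variables. -/
def pX {n : ℕ} (U : Pt n → ℝ) (p : Pt n) (i : Fin n) : ℝ :=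
  fderiv ℝ (fun x => U (x, p.2)) p.1 (basisVec i)

/-- Second partial derivative `∂_{ij}` in the `x` variables. -/
def pXX {n : ℕ} (U : Pt n → ℝ) (p : Pt n) (i j : Fin n) : ℝ :=
  fderiv ℝ (fun x => pX U (x, p.2) j) p.1 (basisVec i)

/-- The extension operator `a^{ij}(x)∂_{ij}U + |z|^{2−1/s}∂_{zz}U`. -/
def AOp {n : ℕ} (s : ℝ) (a : Euc n → Fin n → Fin n → ℝ) (U : Pt n → ℝ) (p : Pt n) : ℝ :=
  (∑ i, ∑ j, a p.1 i j * pXX U p i j) + |p.2| ^ (2 - 1 / s) * pZZ U p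

/-- Identity coefficients (giving the Laplacian in `x`). -/
def idCoef (n : ℕ) : Euc n → Fin n → Fin n → ℝ := fun _ i j => if i = j then 1 else 0

/-- Symmetric, uniformly elliptic coefficients on `Ω`. -/
def IsElliptic {n : ℕ} (lam Lam : ℝ) (a : Euc n → Fin n → Fin n → ℝ) (Ω : Set (Euc n)) : Prop :=
  ∀ x ∈ Ω, (∀ i j, a x i j = a x j i) ∧
    ∀ ξ : Fin n → ℝ,
      lam * ∑ i, ξ i ^ 2 ≤ ∑ i, ∑ j, a x i j * ξ i * ξ j ∧
      ∑ i, ∑ j, a x i j * ξ i * ξ j ≤ Lam * ∑ i, ξ i ^ 2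

/-- `ψ` touches `U` from above at `p` within `D`. -/
def TouchAbove {n : ℕ} (ψ U : Pt n → ℝ) (D : Set (Pt n)) (p : Pt n) : Prop :=
  ψ p = U p ∧ ∃ E : Set (Pt n), IsOpen E ∧ Convex ℝ E ∧ p ∈ E ∧ ∀ q ∈ E ∩ D, U q ≤ ψ q

/-- `ψ` touches `U` from below at `p` within `D`. -/
def TouchBelow {n : ℕ} (ψ U : Pt n → ℝ) (D : Set (Pt n)) (p : Pt n) : Prop :=
  ψ p = U p ∧ ∃ E : Set (Pt n), IsOpen E ∧ Convex ℝ E ∧ p ∈ E ∧ ∀ q ∈ E ∩ D, ψ q ≤ U q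

/-- `f` admits a continuous extension to the closure of `D`. -/
def ExtCont {n : ℕ} (f : Pt n → ℝ) (D : Set (Pt n)) : Prop :=
  ∃ g : Pt n → ℝ, ContinuousOn g (closure D) ∧ EqOn f g D

/-- The test class `C_s` on an (open, upper) region `D`. -/
def MemCs {n : ℕ} (s : ℝ) (D : Set (Pt n)) (ψ : Pt n → ℝ) : Prop :=
  ContDiffOn ℝ 2 ψ D ∧ ExtCont ψ D ∧
  (∀ i, ExtCont (fun p => pX ψ p i) D) ∧
  (∀ i j, ExtCont (fun p => pXX ψ p i j) D) ∧
  ExtCont (pZ ψ) D ∧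
  ExtCont (fun p => |p.2| ^ (2 - 1 / s) * pZZ ψ p) D ∧
  ∀ p ∈ closure D, p.2 = 0 →
    ∃ L, HasDerivWithinAt (fun t => ψ (p.1, t)) L (Ici (0 : ℝ)) 0 ∧
      Tendsto (pZ ψ) (𝓝[D] p) (𝓝 L)

/-- `C_s`-viscosity subsolution of `a^{ij}∂_{ij}U + |z|^{2-1/s}∂_{zz}U = F` in `D`,
`∂_z U = f` on the flat part `T ⊂ {z = 0}`. -/
def ViscSub {n : ℕ} (s : ℝ) (a : Euc n → Fin n → Fin n → ℝ) (F : Pt n → ℝ) (f : Euc n → ℝ)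
    (D T : Set (Pt n)) (U : Pt n → ℝ) : Prop :=
  (∀ ψ : Pt n → ℝ, ContDiffOn ℝ 2 ψ D → ∀ p ∈ D, TouchAbove ψ U D p → F p ≤ AOp s a ψ p) ∧
  (∀ ψ : Pt n → ℝ, MemCs s (D ∩ {q : Pt n | 0 < q.2}) ψ → ∀ p ∈ T,
    TouchAbove ψ U ((D ∩ {q : Pt n | 0 < q.2}) ∪ T) p →
    ∀ L, HasDerivWithinAt (fun t => ψ (p.1, t)) L (Ici (0 : ℝ)) 0 → f p.1 ≤ L)

/-- `C_s`-viscosity supersolution. -/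
def ViscSuper {n : ℕ} (s : ℝ) (a : Euc n → Fin n → Fin n → ℝ) (F : Pt n → ℝ) (f : Euc n → ℝ)
    (D T : Set (Pt n)) (U : Pt n → ℝ) : Prop :=
  (∀ ψ : Pt n → ℝ, ContDiffOn ℝ 2 ψ D → ∀ p ∈ D, TouchBelow ψ U D p → AOp s a ψ p ≤ F p) ∧
  (∀ ψ : Pt n → ℝ, MemCs s (D ∩ {q : Pt n | 0 < q.2}) ψ → ∀ p ∈ T,
    TouchBelow ψ U ((D ∩ {q : Pt n | 0 < q.2}) ∪ T) p →
    ∀ L, HasDerivWithinAt (fun t => ψ (p.1, t)) L (Ici (0 : ℝ)) 0 → L ≤ f p.1)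

/-- `C_s`-viscosity solution. -/
def ViscSol {n : ℕ} (s : ℝ) (a : Euc n → Fin n → Fin n → ℝ) (F : Pt n → ℝ) (f : Euc n → ℝ)
    (D T : Set (Pt n)) (U : Pt n → ℝ) : Prop :=
  ViscSub s a F f D T U ∧ ViscSuper s a F f D T U

/-- `C_s`-viscosity solution of the reflected problem on a region `S` symmetric across `{z=0}`:
the equation holds in `S ∩ {z ≠ 0}` and the Neumann condition on `S ∩ {z = 0}`. -/
def ViscSolRefl {n : ℕ} (s : ℝ) (a : Euc n → Fin n → Fin n → ℝ) (F : Pt n → ℝ) (f : Euc n → ℝ)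
    (S : Set (Pt n)) (U : Pt n → ℝ) : Prop :=
  ViscSub s a F f (S ∩ {p : Pt n | p.2 ≠ 0}) (S ∩ {p : Pt n | p.2 = 0}) U ∧
  ViscSuper s a F f (S ∩ {p : Pt n | p.2 ≠ 0}) (S ∩ {p : Pt n | p.2 = 0}) U

/-- The upper half-cylinder `S_r(0) × (S_ρ(0))⁺ ⊂ ℝⁿ × ℝ`. -/
def cylUp (n : ℕ) (s r ρ : ℝ) : Set (Pt n) := secX r (0 : Euc n) ×ˢ (secH s ρ 0 ∩ Ioi (0 : ℝ))

/-- The flat piece `T_r = S_r(0) × {0}`. -/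
def Tflat (n : ℕ) (r : ℝ) : Set (Pt n) := secX r (0 : Euc n) ×ˢ ({0} : Set ℝ)

/-- Upper half of the unit section of `Φ` in ℝⁿ⁺¹. -/
def Dupper (n : ℕ) (s : ℝ) : Set (Pt n) :=
  secPhi s 1 ((0 : Euc n), (0 : ℝ)) ∩ {p : Pt n | 0 < p.2}

/-- Flat part of the unit section of `Φ`. -/
def Tzero (n : ℕ) (s : ℝ) : Set (Pt n) :=
  secPhi s 1 ((0 : Euc n), (0 : ℝ)) ∩ {p : Pt n | p.2 = 0}

/-- Oscillation of `H` on `A`. -/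
def oscOn {n : ℕ} (H : Pt n → ℝ) (A : Set (Pt n)) : ℝ := sSup (H '' A) - sInf (H '' A)

/-- Norm of the `k`-th derivative in the `x` variables. -/
def DxkNorm {n : ℕ} (k : ℕ) (H : Pt n → ℝ) (p : Pt n) : ℝ :=
  ‖iteratedFDeriv ℝ k (fun x => H (x, p.2)) p.1‖

/-- Classical solution of `Δ_x H + z^{2−1/s}∂_{zz}H = 0` in `D`, `∂_z H = 0` on `T`. -/
def ClassicalHarm (n : ℕ) (s : ℝ) (D T : Set (Pt n)) (H : Pt n → ℝ) : Prop :=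
  ContDiffOn ℝ 2 H D ∧ ContinuousOn H (D ∪ T) ∧
  (∀ p ∈ D, (∑ i, pXX H p i i) + |p.2| ^ (2 - 1 / s) * pZZ H p = 0) ∧
  (∀ p ∈ T, HasDerivWithinAt (fun t => H (p.1, t)) 0 (Ici (0 : ℝ)) 0)

/-- Contact set obtained by sliding Monge–Ampère paraboloids of opening `a` with vertices in
`B` from below until they touch the graph of `U` over `K`. -/
def contactSet {n : ℕ} (s a : ℝ) (U : Pt n → ℝ) (K B : Set (Pt n)) : Set (Pt n) :=
  {p | p ∈ K ∧ ∃ v ∈ B, ∀ q ∈ K, U p + a * deltaPhi s v p ≤ U q + a * deltaPhi s v q}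

def tiltBend (r ε K t : ℝ) : ℝ := ε * t - K * t ^ r

section TiltBend

variable {r ε K : ℝ}

theorem hasDerivAt_tiltBend (hr : 1 ≤ r) (t : ℝ) :
    HasDerivAt (tiltBend r ε K) (ε - K * (r * t ^ (r - 1))) t := by
  have h := ((hasDerivAt_id t).const_mul ε).fun_sub
    ((Real.hasDerivAt_rpow_const (Or.inr hr)).const_mul K)
  simp only [id, mul_one] at h
  exact h

theorem differentiable_tiltBend (hr : 1 ≤ r) : Differentiable ℝ (tiltBend r ε K) :=
  fun t => (hasDerivAt_tiltBend hr t).differentiableAt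

theorem hasDerivAt_tiltBend_zero (hr : 1 < r) : HasDerivAt (tiltBend r ε K) ε 0 := by
  simpa [Real.zero_rpow (sub_pos.mpr hr).ne'] using hasDerivAt_tiltBend (ε := ε) (K := K) hr.le 0

theorem deriv_tiltBend (hr : 1 ≤ r) :
    deriv (tiltBend r ε K) = fun t => ε - K * (r * t ^ (r - 1)) :=
  funext fun t => (hasDerivAt_tiltBend hr t).deriv

theorem hasDerivAt_deriv_tiltBend (hr : 1 ≤ r) {t : ℝ} (ht : t ≠ 0) :
    HasDerivAt (deriv (tiltBend r ε K)) (-(K * (r * ((r - 1) * t ^ (r - 2))))) t := by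
  rw [deriv_tiltBend hr]
  have := ((Real.hasDerivAt_rpow_const (p := r - 1) (Or.inl ht)).const_mul r).const_mul K
  simpa [show r - 1 - 1 = r - 2 by ring] using (hasDerivAt_const t ε).fun_sub this

theorem continuous_deriv_tiltBend (hr : 1 ≤ r) : Continuous (deriv (tiltBend r ε K)) := by
  rw [deriv_tiltBend hr]
  have := Real.continuous_rpow_const (sub_nonneg.mpr hr)
  fun_prop

theorem contDiffAt_tiltBend {t : ℝ} (ht : t ≠ 0) : ContDiffAt ℝ 2 (tiltBend r ε K) t :=
  (contDiffAt_id.const_smul ε).sub ((Real.contDiffAt_rpow_const_of_ne ht).const_smul K)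

theorem tiltBend_zero (hr : r ≠ 0) : tiltBend r ε K 0 = 0 := by
  simp [tiltBend, Real.zero_rpow hr]

theorem exists_tiltBend_nonneg (hr : 1 < r) (hε : 0 < ε) :
    ∃ δ > 0, ∀ t, 0 ≤ t → t < δ → 0 ≤ tiltBend r ε K t := by
  have hslope : ContinuousAt (fun t : ℝ => ε - K * t ^ (r - 1)) 0 :=
    (continuous_const.sub (continuous_const.mul
      (Real.continuous_rpow_const (sub_pos.mpr hr).le))).continuousAt
  have hpos : ∀ᶠ t in 𝓝 0, 0 < ε - K * t ^ (r - 1) :=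
    continuousAt_const.eventually_lt hslope (by simpa [Real.zero_rpow (sub_pos.mpr hr).ne'])
  obtain ⟨δ, hδ, hball⟩ := Metric.eventually_nhds_iff.mp hpos
  refine ⟨δ, hδ, fun t ht htδ => ?_⟩
  have hfactor : tiltBend r ε K t = t * (ε - K * t ^ (r - 1)) := by
    have hsplit : t ^ r = t * t ^ (r - 1) := by
      rw [← Real.rpow_one_add' ht (by linarith), add_sub_cancel]
    rw [tiltBend, hsplit]
    ring
  rw [hfactor]
  exact mul_nonneg ht (hball (by simpa [abs_of_nonneg ht] using htδ)).le

end TiltBend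

theorem ContDiffOn.comp_prodMk_right {n : ℕ} {k : WithTop ℕ∞} {ψ : Pt n → ℝ} {D : Set (Pt n)}
    (hψ : ContDiffOn ℝ k ψ D) (x : Euc n) :
    ContDiffOn ℝ k (fun t => ψ (x, t)) {t | (x, t) ∈ D} :=
  hψ.comp (contDiffOn_const.prodMk contDiffOn_id) fun _ ht => ht

theorem deriv_deriv_add_of_contDiffOn {f g : ℝ → ℝ} {V : Set ℝ} {x : ℝ} (hV : IsOpen V)
    (hx : x ∈ V) (hf : ContDiffOn ℝ 2 f V) (hg : ContDiffOn ℝ 2 g V) :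
    deriv (deriv fun t => f t + g t) x = deriv (deriv f) x + deriv (deriv g) x := by
  have hderiv_add : deriv (fun t => f t + g t) =ᶠ[𝓝 x] fun t => deriv f t + deriv g t := by
    filter_upwards [hV.mem_nhds hx] with t ht
    exact deriv_fun_add ((hf.differentiableOn two_ne_zero).differentiableAt (hV.mem_nhds ht))
      ((hg.differentiableOn two_ne_zero).differentiableAt (hV.mem_nhds ht))
  have hf' := (hf.deriv_of_isOpen hV (m := 1) le_rfl).differentiableOn one_ne_zero
  have hg' := (hg.deriv_of_isOpen hV (m := 1) le_rfl).differentiableOn one_ne_zero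
  rw [hderiv_add.deriv_eq]
  exact deriv_fun_add (hf'.differentiableAt (hV.mem_nhds hx))
    (hg'.differentiableAt (hV.mem_nhds hx))

section Partials

variable {n : ℕ}

theorem pX_add_comp_snd (ψ : Pt n → ℝ) (c : ℝ → ℝ) (q : Pt n) (i : Fin n) :
    pX (fun p => ψ p + c p.2) q i = pX ψ q i := by
  simp only [pX, fderiv_add_const]

theorem pXX_add_comp_snd (ψ : Pt n → ℝ) (c : ℝ → ℝ) (q : Pt n) (i j : Fin n) :
    pXX (fun p => ψ p + c p.2) q i j = pXX ψ q i j := by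
  simp only [pXX, pX_add_comp_snd]

theorem pZ_add_comp_snd {ψ : Pt n → ℝ} {c : ℝ → ℝ} {q : Pt n}
    (hψ : DifferentiableAt ℝ (fun t => ψ (q.1, t)) q.2) (hc : DifferentiableAt ℝ c q.2) :
    pZ (fun p => ψ p + c p.2) q = pZ ψ q + deriv c q.2 :=
  deriv_fun_add hψ hc

theorem pZZ_add_comp_snd {ψ : Pt n → ℝ} {c : ℝ → ℝ} {q : Pt n} {V : Set ℝ} (hV : IsOpen V)
    (hqV : q.2 ∈ V) (hψ : ContDiffOn ℝ 2 (fun t => ψ (q.1, t)) V) (hc : ContDiffOn ℝ 2 c V) :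
    pZZ (fun p => ψ p + c p.2) q = pZZ ψ q + deriv (deriv c) q.2 :=
  deriv_deriv_add_of_contDiffOn hV hqV hψ hc

end Partials

section ExtCont

variable {n : ℕ} {D : Set (Pt n)} {f g : Pt n → ℝ}

theorem Continuous.extCont (hf : Continuous f) : ExtCont f D :=
  ⟨f, hf.continuousOn, eqOn_refl _ _⟩

theorem ExtCont.congr (hf : ExtCont f D) (h : EqOn f g D) : ExtCont g D :=
  let ⟨f', hf'c, hf'e⟩ := hf
  ⟨f', hf'c, h.symm.trans hf'e⟩

theorem ExtCont.add (hf : ExtCont f D) (hg : ExtCont g D) : ExtCont (fun p => f p + g p) D :=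
  let ⟨f', hf'c, hf'e⟩ := hf
  let ⟨g', hg'c, hg'e⟩ := hg
  ⟨fun p => f' p + g' p, hf'c.add hg'c, fun _ hp => by simp only [hf'e hp, hg'e hp]⟩

theorem ExtCont.const_mul (c : ℝ) (hf : ExtCont f D) : ExtCont (fun p => c * f p) D :=
  let ⟨f', hf'c, hf'e⟩ := hf
  ⟨fun p => c * f' p, continuousOn_const.mul hf'c, fun _ hp => by simp only [hf'e hp]⟩

theorem ExtCont.sum {ι : Type*} (t : Finset ι) {f : ι → Pt n → ℝ}
    (h : ∀ i ∈ t, ExtCont (f i) D) : ExtCont (fun p => ∑ i ∈ t, f i p) D := by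
  choose! f' hf'c hf'e using h
  exact ⟨fun p => ∑ i ∈ t, f' i p, continuousOn_finsetSum t hf'c,
    fun _ hp => Finset.sum_congr rfl fun i hi => hf'e i hi hp⟩

theorem ExtCont.exists_tendsto (hf : ExtCont f D) (p : Pt n) :
    ∃ M, Tendsto f (𝓝[D] p) (𝓝 M) := by
  obtain ⟨f', hf'c, hf'e⟩ := hf
  by_cases hp : p ∈ closure D
  · exact ⟨f' p, ((hf'c p hp).mono subset_closure).tendsto.congr'
      (eventually_nhdsWithin_of_forall fun _ hq => (hf'e hq).symm)⟩
  · rw [mem_closure_iff_nhdsWithin_neBot, not_neBot] at hp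
    exact ⟨0, hp ▸ tendsto_bot⟩

end ExtCont

theorem MemCs.extCont_AOp {n : ℕ} {s : ℝ} {D : Set (Pt n)} {ψ : Pt n → ℝ} (hψ : MemCs s D ψ)
    (A : Fin n → Fin n → ℝ) : ExtCont (AOp s (fun _ => A) ψ) D := by
  obtain ⟨-, -, -, hpXX, -, hpZZ, -⟩ := hψ
  exact (ExtCont.sum _ fun i _ => ExtCont.sum _ fun j _ => (hpXX i j).const_mul (A i j)).add hpZZ

theorem TouchAbove.add_nonneg {n : ℕ} {ψ U c : Pt n → ℝ} {D V : Set (Pt n)} {p : Pt n}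
    (h : TouchAbove ψ U D p) (hc0 : c p = 0) (hV : IsOpen V) (hVc : Convex ℝ V) (hpV : p ∈ V)
    (hc : ∀ q ∈ V ∩ D, 0 ≤ c q) : TouchAbove (fun q => ψ q + c q) U D p := by
  obtain ⟨hψp, E, hE, hEc, hpE, hUψ⟩ := h
  refine ⟨by simp only [hc0, add_zero, hψp], E ∩ V, hE.inter hV, hEc.inter hVc, ⟨hpE, hpV⟩,
    fun q hq => ?_⟩
  have := hUψ q ⟨hq.1.1, hq.2⟩
  have := hc q ⟨hq.1.2, hq.2⟩
  linarith

theorem isOpen_Dupper {n : ℕ} {s : ℝ} (hs : 0 < s) : IsOpen (Dupper n s) := by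
  have hpow := Real.continuous_rpow_const (one_div_pos.mpr hs).le
  unfold Dupper secPhi
  refine (isOpen_lt ?_ continuous_const).inter (isOpen_lt continuous_const continuous_snd)
  unfold deltaPhi deltaX deltaH hfun hder
  fun_prop

section Perturbation

variable {n : ℕ} {s ε K : ℝ} {D : Set (Pt n)} {ψ : Pt n → ℝ} {q : Pt n}

theorem pZ_add_tiltBend (hs0 : 0 < s) (hs1 : s ≤ 1) (hD : IsOpen D) (hψ : ContDiffOn ℝ 2 ψ D)
    (hq : q ∈ D) :
    pZ (fun p => ψ p + tiltBend (1 / s) ε K p.2) q = pZ ψ q + deriv (tiltBend (1 / s) ε K) q.2 :=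
  pZ_add_comp_snd (((hψ.comp_prodMk_right q.1).differentiableOn two_ne_zero).differentiableAt
      ((hD.preimage (Continuous.prodMk_right q.1)).mem_nhds hq))
    (differentiable_tiltBend (one_le_one_div hs0 hs1) _)

theorem weighted_pZZ_add_tiltBend (hs0 : 0 < s) (hs1 : s ≤ 1) (hD : IsOpen D)
    (hDpos : ∀ q ∈ D, 0 < q.2) (hψ : ContDiffOn ℝ 2 ψ D) (hq : q ∈ D) :
    |q.2| ^ (2 - 1 / s) * pZZ (fun p => ψ p + tiltBend (1 / s) ε K p.2) q =
      |q.2| ^ (2 - 1 / s) * pZZ ψ q - K * (1 / s * (1 / s - 1)) := by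
  have hV : IsOpen {t | (q.1, t) ∈ D} := hD.preimage (Continuous.prodMk_right q.1)
  have hbend : ContDiffOn ℝ 2 (tiltBend (1 / s) ε K) {t | (q.1, t) ∈ D} := fun t ht =>
    (contDiffAt_tiltBend (hDpos _ ht).ne').contDiffWithinAt
  have hz := hDpos q hq
  have hcancel : q.2 ^ (2 - 1 / s) * q.2 ^ (1 / s - 2) = 1 := by
    rw [← Real.rpow_add hz]
    simp
  rw [pZZ_add_comp_snd hV hq (hψ.comp_prodMk_right q.1) hbend,
    (hasDerivAt_deriv_tiltBend (one_le_one_div hs0 hs1) hz.ne').deriv, abs_of_pos hz]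
  linear_combination (-(K * (1 / s * (1 / s - 1)))) * hcancel

theorem AOp_add_tiltBend (hs0 : 0 < s) (hs1 : s ≤ 1) (hD : IsOpen D)
    (hDpos : ∀ q ∈ D, 0 < q.2) (hψ : ContDiffOn ℝ 2 ψ D) (a : Euc n → Fin n → Fin n → ℝ)
    (hq : q ∈ D) :
    AOp s a (fun p => ψ p + tiltBend (1 / s) ε K p.2) q =
      AOp s a ψ q - K * (1 / s * (1 / s - 1)) := by
  simp only [AOp, pXX_add_comp_snd]
  rw [weighted_pZZ_add_tiltBend hs0 hs1 hD hDpos hψ hq]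
  ring

theorem MemCs.add_tiltBend (hs0 : 0 < s) (hs1 : s < 1) (hD : IsOpen D)
    (hDpos : ∀ q ∈ D, 0 < q.2) (hψ : MemCs s D ψ) :
    MemCs s D (fun p => ψ p + tiltBend (1 / s) ε K p.2) := by
  obtain ⟨hC2, hext, hpX, hpXX, hpZ, hpZZ, hbdry⟩ := hψ
  have hr : 1 < 1 / s := one_lt_one_div hs0 hs1
  have hslope : Continuous (deriv (tiltBend (1 / s) ε K)) := continuous_deriv_tiltBend hr.le
  refine ⟨?_, ?_, fun i => ?_, fun i j => ?_, ?_, ?_, ?_⟩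
  · exact hC2.add fun q hq =>
      ((contDiffAt_tiltBend (hDpos q hq).ne').comp q contDiffAt_snd).contDiffWithinAt
  · exact hext.add ((differentiable_tiltBend hr.le).continuous.comp continuous_snd).extCont
  · exact (hpX i).congr fun q _ => (pX_add_comp_snd ψ _ q i).symm
  · exact (hpXX i j).congr fun q _ => (pXX_add_comp_snd ψ _ q i j).symm
  · exact (hpZ.add (hslope.comp continuous_snd).extCont).congr fun q hq =>
      (pZ_add_tiltBend hs0 hs1.le hD hC2 hq).symm
  · refine (hpZZ.add (continuous_const (y := -(K * (1 / s * (1 / s - 1))))).extCont).congr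
      fun q hq => ?_
    rw [weighted_pZZ_add_tiltBend hs0 hs1.le hD hDpos hC2 hq]
    ring
  · intro p hp hz
    obtain ⟨L, hL, hT⟩ := hbdry p hp hz
    have hslope_p : Tendsto (fun q : Pt n => deriv (tiltBend (1 / s) ε K) q.2) (𝓝[D] p) (𝓝 ε) := by
      have := ((hslope.comp continuous_snd).tendsto p).mono_left (nhdsWithin_le_nhds (s := D))
      rwa [Function.comp_apply, hz, (hasDerivAt_tiltBend_zero hr).deriv] at this
    exact ⟨L + ε, hL.add (hasDerivAt_tiltBend_zero hr).hasDerivWithinAt,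
      (hT.add hslope_p).congr' (eventually_nhdsWithin_of_forall fun q hq =>
        (pZ_add_tiltBend hs0 hs1.le hD hC2 hq).symm)⟩

end Perturbation

theorem neumann_characterization_one_general (n : ℕ) (s : ℝ)
    (hs0 : 0 < s) (hs1 : s < 1)
    (a : Euc n → Fin n → Fin n → ℝ) (f : Euc n → ℝ) (F : Pt n → ℝ) (U : Pt n → ℝ) :
    (∀ ψ : Pt n → ℝ, MemCs s (Dupper n s) ψ → ∀ p ∈ Tzero n s,
        TouchAbove ψ U (Dupper n s ∪ Tzero n s) p →
        ∀ L : ℝ, HasDerivWithinAt (fun t => ψ (p.1, t)) L (Ici (0 : ℝ)) 0 → f p.1 ≤ L)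
    ↔
    (∀ ψ : Pt n → ℝ, MemCs s (Dupper n s) ψ → ∀ p ∈ Tzero n s,
        TouchAbove ψ U (Dupper n s ∪ Tzero n s) p →
        ∀ M : ℝ,
          Tendsto (fun q => (∑ i, ∑ j, a p.1 i j * pXX ψ q i j) +
            |q.2| ^ (2 - 1 / s) * pZZ ψ q) (𝓝[Dupper n s] p) (𝓝 M) →
        ∀ L : ℝ, HasDerivWithinAt (fun t => ψ (p.1, t)) L (Ici (0 : ℝ)) 0 →
          (F p ≤ M ∨ f p.1 ≤ L)) := by
  refine ⟨fun h ψ hψ p hp htouch _ _ L hL => Or.inr (h ψ hψ p hp htouch L hL), ?_⟩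
  intro h ψ hψ p hp htouch L hL
  have hr : 1 < 1 / s := one_lt_one_div hs0 hs1
  have hpz : p.2 = 0 := hp.2
  have hD : IsOpen (Dupper n s) := isOpen_Dupper hs0
  have hDpos : ∀ q ∈ Dupper n s, 0 < q.2 := fun q hq => hq.2
  obtain ⟨M, hM⟩ := (hψ.extCont_AOp (a p.1)).exists_tendsto p
  refine le_of_forall_pos_le_add fun ε hε => ?_
  set κ := 1 / s * (1 / s - 1)
  have hκ : 0 < κ := mul_pos (by linarith) (by linarith)
  set K := (M - F p + 1) / κ
  have hMK : M - K * κ < F p := by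
    simp only [K, div_mul_cancel₀ _ hκ.ne']
    linarith
  obtain ⟨δ, hδ, hbend⟩ := exists_tiltBend_nonneg hr hε (K := K)
  have htouch' := htouch.add_nonneg (c := fun q => tiltBend (1 / s) ε K q.2)
    (by simp only [hpz, tiltBend_zero (one_div_pos.mpr hs0).ne'])
    (isOpen_lt continuous_snd continuous_const)
    (convex_halfSpace_lt ⟨fun _ _ => rfl, fun _ _ => rfl⟩ δ) (show p.2 < δ by rwa [hpz])
    fun q ⟨hqδ, hq⟩ => hbend _ (by rcases hq with hq | hq; exacts [hq.2.le, hq.2.ge]) hqδ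
  have hop : Tendsto (AOp s (fun _ => a p.1) (fun q => ψ q + tiltBend (1 / s) ε K q.2))
      (𝓝[Dupper n s] p) (𝓝 (M - K * κ)) :=
    (hM.sub_const _).congr' (eventually_nhdsWithin_of_forall fun q hq =>
      (AOp_add_tiltBend hs0 hs1.le hD hDpos hψ.1 _ hq).symm)
  exact (h _ (hψ.add_tiltBend hs0 hs1 hD hDpos) p hp htouch' _ hop _
    (hL.add (hasDerivAt_tiltBend_zero hr).hasDerivWithinAt)).resolve_left hMK.not_ge

/-- **Lemma 4.2 (first characterization of the viscosity Neumann condition):** for the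
subsolution (touching from above) condition, requiring `∂_zψ(x₀,0) ≥ f(x₀)` for every `C_s`
test function is equivalent to requiring, for every `C_s` test function, that either the
operator value at `(x₀,0)` is at least `F(x₀,0)` or `∂_zψ(x₀,0) ≥ f(x₀)`. -/
theorem neumann_characterization_one (n : ℕ) (hn : 1 ≤ n) (s lam Lam : ℝ)
    (hs0 : 0 < s) (hs1 : s < 1) (hlam : 0 < lam) (hLam : lam ≤ Lam)
    (a : Euc n → Fin n → Fin n → ℝ) (f : Euc n → ℝ) (F : Pt n → ℝ) (U : Pt n → ℝ)
    (ha : IsElliptic lam Lam a (secX 1 (0 : Euc n)))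
    (hf : ContinuousOn f (secX 1 (0 : Euc n)))
    (hF : ContinuousOn F (Dupper n s ∪ Tzero n s))
    (hU : ContinuousOn U (closure (Dupper n s))) :
    (∀ ψ : Pt n → ℝ, MemCs s (Dupper n s) ψ → ∀ p ∈ Tzero n s,
        TouchAbove ψ U (Dupper n s ∪ Tzero n s) p →
        ∀ L : ℝ, HasDerivWithinAt (fun t => ψ (p.1, t)) L (Ici (0 : ℝ)) 0 → f p.1 ≤ L)
    ↔
    (∀ ψ : Pt n → ℝ, MemCs s (Dupper n s) ψ → ∀ p ∈ Tzero n s,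
        TouchAbove ψ U (Dupper n s ∪ Tzero n s) p →
        ∀ M : ℝ,
          Tendsto (fun q => (∑ i, ∑ j, a p.1 i j * pXX ψ q i j) +
            |q.2| ^ (2 - 1 / s) * pZZ ψ q) (𝓝[Dupper n s] p) (𝓝 M) →
        ∀ L : ℝ, HasDerivWithinAt (fun t => ψ (p.1, t)) L (Ici (0 : ℝ)) 0 →
          (F p ≤ M ∨ f p.1 ≤ L)) :=
  neumann_characterization_one_general n s hs0 hs1 a f F U
end
end

section
/- Comparison of one-dimensional sections with Euclidean intervals away from the degeneracy (Lemma 3.1): Let R > 0 and z₀ ∈ ℝ with z₀ ≠ 0. (a) If the interval B_R(z₀) = (z₀ − R, z₀ + R) has closure contained in {z ≠ 0}, then B_R(z₀) ⊂ S_{σR²/2}(z₀), where σ = sup of h'' over B_R(z₀). (b) If the section S_R(z₀) has closure contained in {z ≠ 0}, then S_R(z₀) is contained (with compact closure) in B_{√(2R/σ̃)}(z₀), where σ̃ = inf of h'' over S_R(z₀). -/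
open Set Filter Topology MeasureTheory
open scoped RealInnerProductSpace

noncomputable section

/-! Away from `0` the function `h` is twice differentiable, so Taylor's formula with Lagrange
remainder gives `δ_h(z₀, z) = h''(ξ) (z - z₀)² / 2` for some `ξ` between `z₀` and `z`, provided the
segment `[z₀, z]` avoids `0`. In (a) that segment lies in `B_R(z₀)`; in (b) it lies in `S_R(z₀)`,
which is convex because `h` is. In either case the bound on `h''` applies at `ξ`. The closure of
`S_R(z₀)` is compact because `h` grows superlinearly, which makes `δ_h(z₀, ·)` coercive. -/

theorem exists_ratio_hasDerivAt_eq_ratio_slope_uIoo {f f' g g' : ℝ → ℝ} {a b : ℝ} (hab : a ≠ b)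
    (hf : ∀ x ∈ uIcc a b, HasDerivAt f (f' x) x) (hg : ∀ x ∈ uIcc a b, HasDerivAt g (g' x) x) :
    ∃ c ∈ uIoo a b, (g b - g a) * f' c = (f b - f a) * g' c := by
  wlog hlt : a < b generalizing a b
  · obtain ⟨c, hc, hcauchy⟩ := this hab.symm (uIcc_comm a b ▸ hf) (uIcc_comm a b ▸ hg)
      (lt_of_le_of_ne (not_lt.1 hlt) hab.symm)
    exact ⟨c, uIoo_comm a b ▸ hc, by linear_combination -hcauchy⟩
  rw [uIcc_of_le hlt.le] at hf hg
  rw [uIoo_of_lt hlt]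
  exact exists_ratio_hasDerivAt_eq_ratio_slope f f' hlt
    (fun x hx => (hf x hx).continuousAt.continuousWithinAt)
    (fun x hx => hf x (Ioo_subset_Icc_self hx)) g g'
    (fun x hx => (hg x hx).continuousAt.continuousWithinAt)
    (fun x hx => hg x (Ioo_subset_Icc_self hx))

theorem exists_taylor_remainder_one_eq {f f' f'' : ℝ → ℝ} {a b : ℝ}
    (hf : ∀ x ∈ uIcc a b, HasDerivAt f (f' x) x) (hf' : ∀ x ∈ uIcc a b, HasDerivAt f' (f'' x) x) :
    ∃ c ∈ uIcc a b, f b - f a - f' a * (b - a) = f'' c * (b - a) ^ 2 / 2 := by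
  rcases eq_or_ne a b with rfl | hab
  · exact ⟨a, left_mem_uIcc, by ring⟩
  -- Cauchy's mean value theorem against `(x - a)² / 2`, then Lagrange's for `f'` on `[a, c]`.
  obtain ⟨c, hc, hcauchy⟩ := exists_ratio_hasDerivAt_eq_ratio_slope_uIoo hab
    (f := fun x => f x - f a - f' a * (x - a)) (f' := fun x => f' x - f' a)
    (g := fun x => (x - a) ^ 2 / 2) (g' := fun x => x - a)
    (fun x hx => by
      simpa using ((hf x hx).sub_const (f a)).fun_sub
        (((hasDerivAt_id' x).sub_const a).const_mul (f' a)))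
    (fun x _ => by simpa using (((hasDerivAt_id' x).sub_const a).pow 2).div_const 2)
  have hca : c ≠ a := ne_of_mem_of_not_mem hc left_notMem_uIoo
  have hsub : uIcc a c ⊆ uIcc a b := uIcc_subset_uIcc_left (uIoo_subset_uIcc_self hc)
  obtain ⟨d, hd, hmvt⟩ := exists_ratio_hasDerivAt_eq_ratio_slope_uIoo hca.symm
    (fun x hx => hf' x (hsub hx)) (fun x _ => hasDerivAt_id' x)
  refine ⟨d, hsub (uIoo_subset_uIcc_self hd), mul_right_cancel₀ (sub_ne_zero.2 hca) ?_⟩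
  linear_combination -hcauchy - (b - a) ^ 2 / 2 * hmvt

theorem hasDerivAt_abs_rpow_of_ne_zero {p x : ℝ} (hx : x ≠ 0) :
    HasDerivAt (fun y : ℝ => |y| ^ p) (p * |x| ^ (p - 2) * x) x := by
  convert (hasDerivAt_abs hx).rpow_const (p := p) (Or.inl (abs_ne_zero.2 hx)) using 1
  rw [show p - 1 = (p - 2) + 1 by ring, Real.rpow_add_one (abs_ne_zero.2 hx)]
  linear_combination p * |x| ^ (p - 2) * (sign_mul_abs x).symm

theorem convexOn_abs_rpow {p : ℝ} (hp : 1 ≤ p) : ConvexOn ℝ univ fun x : ℝ => |x| ^ p := by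
  refine ⟨convex_univ, fun x _ y _ a b ha hb hab => ?_⟩
  calc |a • x + b • y| ^ p ≤ (a • |x| + b • |y|) ^ p := by
        refine Real.rpow_le_rpow (abs_nonneg _) ?_ (by linarith)
        simpa [smul_eq_mul, abs_mul, abs_of_nonneg ha, abs_of_nonneg hb] using
          abs_add_le (a * x) (b * y)
    _ ≤ a • |x| ^ p + b • |y| ^ p := (convexOn_rpow hp).2 (abs_nonneg x) (abs_nonneg y) ha hb hab

theorem tendsto_mul_rpow_add_mul_atTop {c p : ℝ} (hc : 0 < c) (hp : 1 < p) (A : ℝ) :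
    Tendsto (fun u : ℝ => c * u ^ p + A * u) atTop atTop := by
  have hgrowth : Tendsto (fun u : ℝ => u * (c * u ^ (p - 1) + A)) atTop atTop :=
    tendsto_id.atTop_mul_atTop₀ <| tendsto_atTop_add_const_right _ A <|
      (tendsto_rpow_atTop (by linarith)).const_mul_atTop hc
  refine hgrowth.congr' ?_
  filter_upwards [eventually_gt_atTop 0] with u hu
  rw [mul_add, ← mul_assoc, mul_comm u c, mul_assoc, ← Real.rpow_one_add' hu.le (by linarith)]
  ring_nf

section
variable {s : ℝ}

theorem hasDerivAt_hfun (hs0 : 0 < s) (hs1 : s < 1) (z : ℝ) :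
    HasDerivAt (hfun s) (hder s z) z := by
  refine ((hasDerivAt_abs_rpow z (p := 1 / s) (by rw [lt_div_iff₀ hs0]; linarith)).const_mul
    (s ^ 2 / (1 - s))).congr_deriv ?_
  rw [hder]
  field_simp [(sub_pos.2 hs1).ne']

theorem hasDerivAt_hder (hs0 : s ≠ 0) (hs1 : s ≠ 1) {z : ℝ} (hz : z ≠ 0) :
    HasDerivAt (hder s) (hsec s z) z := by
  have hmul := ((hasDerivAt_id' z).const_mul (s / (1 - s))).mul
    (hasDerivAt_abs_rpow_of_ne_zero (p := 1 / s - 2) hz)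
  refine hmul.congr_deriv ?_
  have hsq : |z| ^ (1 / s - 2 - 2) * z * z = |z| ^ (1 / s - 2) := by
    rw [mul_assoc, ← abs_mul_abs_self, ← mul_assoc, ← Real.rpow_add_one (abs_ne_zero.2 hz),
      ← Real.rpow_add_one (abs_ne_zero.2 hz)]
    ring_nf
  have hcoef : s / (1 - s) * (1 + (1 / s - 2)) = 1 := by
    field_simp [sub_ne_zero.2 hs1.symm]
    ring
  rw [hsec]
  linear_combination (s / (1 - s) * (1 / s - 2)) * hsq + |z| ^ (1 / s - 2) * hcoef

theorem exists_deltaH_eq_hsec_mul_sq (hs0 : 0 < s) (hs1 : s < 1) {z₀ z : ℝ}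
    (h0 : (0 : ℝ) ∉ uIcc z₀ z) :
    ∃ c ∈ uIcc z₀ z, deltaH s z₀ z = hsec s c * (z - z₀) ^ 2 / 2 :=
  exists_taylor_remainder_one_eq (fun _ _ => hasDerivAt_hfun hs0 hs1 _)
    (fun _ hx => hasDerivAt_hder hs0.ne' hs1.ne (ne_of_mem_of_not_mem hx h0))

theorem convexOn_deltaH (hs0 : 0 < s) (hs1 : s < 1) (z₀ : ℝ) : ConvexOn ℝ univ (deltaH s z₀) := by
  have hhfun : ConvexOn ℝ univ (hfun s) := by
    have hc : 0 ≤ s ^ 2 / (1 - s) := div_nonneg (sq_nonneg s) (sub_pos.2 hs1).le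
    exact (convexOn_abs_rpow (p := 1 / s) (by rw [le_div_iff₀ hs0]; linarith)).smul hc
  have hlin : ConvexOn ℝ univ fun z : ℝ => -hder s z₀ * z :=
    (LinearMap.mulLeft ℝ (-hder s z₀)).convexOn convex_univ
  refine ((hhfun.add hlin).add_const (hder s z₀ * z₀ - hfun s z₀)).congr fun z _ => ?_
  simp only [deltaH, Pi.add_apply]
  ring

theorem convex_secH (hs0 : 0 < s) (hs1 : s < 1) (R z₀ : ℝ) : Convex ℝ (secH s R z₀) := by
  simpa [secH] using (convexOn_deltaH hs0 hs1 z₀).convex_lt R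

theorem tendsto_deltaH_cocompact (hs0 : 0 < s) (hs1 : s < 1) (z₀ : ℝ) :
    Tendsto (deltaH s z₀) (cocompact ℝ) atTop := by
  have hgrowth := (tendsto_atTop_add_const_right _ (hder s z₀ * z₀ - hfun s z₀)
    (tendsto_mul_rpow_add_mul_atTop (div_pos (pow_pos hs0 2) (sub_pos.2 hs1))
      (by rw [lt_div_iff₀ hs0]; linarith : 1 < 1 / s) (-|hder s z₀|))).comp
    (tendsto_norm_cocompact_atTop (E := ℝ))
  refine tendsto_atTop_mono (fun z => ?_) hgrowth
  have hlin : hder s z₀ * z ≤ |hder s z₀| * |z| := abs_mul (hder s z₀) z ▸ le_abs_self _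
  simp only [Function.comp_apply, Real.norm_eq_abs, deltaH, hfun]
  linarith

theorem isCompact_closure_secH (hs0 : 0 < s) (hs1 : s < 1) (R z₀ : ℝ) :
    IsCompact (closure (secH s R z₀)) := by
  obtain ⟨K, hK, hKc⟩ :=
    mem_cocompact.1 ((tendsto_deltaH_cocompact hs0 hs1 z₀).eventually_ge_atTop R)
  refine hK.closure_of_subset fun z (hz : deltaH s z₀ z < R) => ?_
  by_contra hzK
  exact not_lt.2 (hKc hzK) hz

theorem Ioo_subset_secH (hs0 : 0 < s) (hs1 : s < 1) {R z₀ σ : ℝ}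
    (h0 : (0 : ℝ) ∉ Icc (z₀ - R) (z₀ + R))
    (hσ : ∀ z ∈ Ioo (z₀ - R) (z₀ + R), hsec s z ≤ σ) :
    Ioo (z₀ - R) (z₀ + R) ⊆ secH s (σ * R ^ 2 / 2) z₀ := by
  intro z hz
  have hz₀ : z₀ ∈ Ioo (z₀ - R) (z₀ + R) := ⟨by linarith [hz.1, hz.2], by linarith [hz.1, hz.2]⟩
  have hseg : uIcc z₀ z ⊆ Ioo (z₀ - R) (z₀ + R) := ordConnected_Ioo.uIcc_subset hz₀ hz
  obtain ⟨c, hc, hdelta⟩ :=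
    exists_deltaH_eq_hsec_mul_sq hs0 hs1 fun h => h0 (Ioo_subset_Icc_self (hseg h))
  have hσpos : 0 < σ := (Real.rpow_pos_of_pos (abs_pos.2
    (ne_of_mem_of_not_mem (Ioo_subset_Icc_self hz₀) h0)) _).trans_le (hσ z₀ hz₀)
  have hdist : (z - z₀) ^ 2 < R ^ 2 := sq_lt_sq' (by linarith [hz.1]) (by linarith [hz.2])
  calc deltaH s z₀ z = hsec s c * (z - z₀) ^ 2 / 2 := hdelta
    _ ≤ σ * (z - z₀) ^ 2 / 2 := by gcongr; exact hσ c (hseg hc)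
    _ < σ * R ^ 2 / 2 := by gcongr

theorem secH_subset_Ioo (hs0 : 0 < s) (hs1 : s < 1) {R z₀ τ : ℝ} (hR : 0 < R)
    (h0 : (0 : ℝ) ∉ secH s R z₀) (hτ : 0 < τ) (hτs : ∀ z ∈ secH s R z₀, τ ≤ hsec s z) :
    secH s R z₀ ⊆ Ioo (z₀ - Real.sqrt (2 * R / τ)) (z₀ + Real.sqrt (2 * R / τ)) := by
  intro z hz
  have hz₀ : z₀ ∈ secH s R z₀ := by simpa [secH, deltaH] using hR
  have hseg : uIcc z₀ z ⊆ secH s R z₀ :=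
    (convex_secH hs0 hs1 R z₀).ordConnected.uIcc_subset hz₀ hz
  obtain ⟨c, hc, hdelta⟩ := exists_deltaH_eq_hsec_mul_sq hs0 hs1 fun h => h0 (hseg h)
  have hdist : (z - z₀) ^ 2 < 2 * R / τ := by
    have hdeltaR : deltaH s z₀ z < R := hz
    rw [lt_div_iff₀ hτ]
    nlinarith [hτs c (hseg hc), sq_nonneg (z - z₀)]
  have habs := abs_lt.1 ((Real.lt_sqrt (abs_nonneg (z - z₀))).2 (by rwa [sq_abs]))
  exact ⟨by linarith [habs.1], by linarith [habs.2]⟩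

end

theorem sections_vs_intervals_general (s : ℝ) (hs0 : 0 < s) (hs1 : s < 1)
    (R z₀ : ℝ) (hR : 0 < R) :
    ((0 : ℝ) ∉ Icc (z₀ - R) (z₀ + R) →
      ∀ σ : ℝ, (∀ z ∈ Ioo (z₀ - R) (z₀ + R), hsec s z ≤ σ) →
        Ioo (z₀ - R) (z₀ + R) ⊆ secH s (σ * R ^ 2 / 2) z₀) ∧
    ((0 : ℝ) ∉ closure (secH s R z₀) →
      IsCompact (closure (secH s R z₀)) ∧
      ∀ τ : ℝ, 0 < τ → (∀ z ∈ secH s R z₀, τ ≤ hsec s z) →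
        secH s R z₀ ⊆ Ioo (z₀ - Real.sqrt (2 * R / τ)) (z₀ + Real.sqrt (2 * R / τ))) :=
  ⟨fun h0 _ hσ => Ioo_subset_secH hs0 hs1 h0 hσ,
    fun h0 => ⟨isCompact_closure_secH hs0 hs1 R z₀,
      fun _ hτ hτs => secH_subset_Ioo hs0 hs1 hR (fun h => h0 (subset_closure h)) hτ hτs⟩⟩

/-- **Lemma 3.1: comparison of one-dimensional sections with euclidean intervals away from the
degeneracy.** -/
theorem sections_vs_intervals (s : ℝ) (hs0 : 0 < s) (hs1 : s < 1)
    (R z₀ : ℝ) (hR : 0 < R) (hz₀ : z₀ ≠ 0) :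
    ((0 : ℝ) ∉ Icc (z₀ - R) (z₀ + R) →
      ∀ σ : ℝ, (∀ z ∈ Ioo (z₀ - R) (z₀ + R), hsec s z ≤ σ) →
        Ioo (z₀ - R) (z₀ + R) ⊆ secH s (σ * R ^ 2 / 2) z₀) ∧
    ((0 : ℝ) ∉ closure (secH s R z₀) →
      IsCompact (closure (secH s R z₀)) ∧
      ∀ τ : ℝ, 0 < τ → (∀ z ∈ secH s R z₀, τ ≤ hsec s z) →
        secH s R z₀ ⊆ Ioo (z₀ - Real.sqrt (2 * R / τ)) (z₀ + Real.sqrt (2 * R / τ))) :=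
  sections_vs_intervals_general s hs0 hs1 R z₀ hR
end
end
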